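/- arXiv:0908.4393 — 8 statements merged into one kernel-verified Lean document; each statement's English description precedes it below -/
import Mathlib

section
/- (Coupling constant metamorphosis) Let H, U : ℝ²ⁿ → ℝ be smooth with U nowhere vanishing, and suppose K(α, x, p) is smooth in (α, x, p) and satisfies {K(α,·,·), H + αU} = 0 for every real parameter α. Fix E ∈ ℝ and set H' = (H − E)/U. Then the function K' defined by K'(x,p) = K(−H'(x,p), x, p) satisfies {K', H'} = 0. -/
open Finset

/-- Canonical Poisson bracket on phase space ℝ²ⁿ = (Fin n → ℝ) × (Fin n → ℝ). -/
noncomputable def pb {n : ℕ} (f g : (Fin n → ℝ) × (Fin n → ℝ) → ℝ) :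
    (Fin n → ℝ) × (Fin n → ℝ) → ℝ := fun z =>
  ∑ j : Fin n,
    (fderiv ℝ f z ((Pi.single j 1 : Fin n → ℝ), 0) * fderiv ℝ g z (0, (Pi.single j 1 : Fin n → ℝ)) -
     fderiv ℝ f z (0, (Pi.single j 1 : Fin n → ℝ)) * fderiv ℝ g z ((Pi.single j 1 : Fin n → ℝ), 0))

/-- Abbreviation for phase space. -/
abbrev PhV (n : ℕ) := (Fin n → ℝ) × (Fin n → ℝ)

/-- Coupling constant metamorphosis: if K(α,·) is a constant of the motion for H + αU for
every α, then K' = K(−H',·) is a constant of the motion for H' = (H − E)/U. -/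
theorem stmt1 {n : ℕ}
    (H U : (Fin n → ℝ) × (Fin n → ℝ) → ℝ)
    (K : ℝ × ((Fin n → ℝ) × (Fin n → ℝ)) → ℝ)
    (hH : ContDiff ℝ (⊤ : ℕ∞) H) (hU : ContDiff ℝ (⊤ : ℕ∞) U) (hK : ContDiff ℝ (⊤ : ℕ∞) K)
    (hUne : ∀ z, U z ≠ 0)
    (hsym : ∀ α : ℝ, ∀ z, pb (fun w => K (α, w)) (fun w => H w + α * U w) z = 0)
    (E : ℝ) :
    ∀ z, pb (fun w => K (-((H w - E) / U w), w)) (fun w => (H w - E) / U w) z = 0 := by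
  intro z
  set α₀ : ℝ := -((H z - E) / U z) with hα₀
  have hHd : HasFDerivAt H (fderiv ℝ H z) z := (hH.differentiable (by simp) z).hasFDerivAt
  have hUd : HasFDerivAt U (fderiv ℝ U z) z := (hU.differentiable (by simp) z).hasFDerivAt
  set hP := fderiv ℝ H z with hhP
  set uP := fderiv ℝ U z with huP
  -- derivative of H' = (H - E)/U
  have hinv : HasDerivAt (fun t : ℝ => t⁻¹) (-(U z ^ 2)⁻¹) (U z) := hasDerivAt_inv (hUne z)
  have hUinv : HasFDerivAt (fun w => (U w)⁻¹) ((-(U z ^ 2)⁻¹) • uP) z :=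
    hinv.comp_hasFDerivAt z hUd
  have hH'd : HasFDerivAt (fun w => (H w - E) / U w)
      ((U z)⁻¹ • (hP + α₀ • uP)) z := by
    have h1 := (hHd.sub_const E).mul hUinv
    simp only [div_eq_mul_inv]
    refine h1.congr_fderiv ?_
    refine ContinuousLinearMap.ext fun v => ?_
    have hU0 := hUne z
    simp only [ContinuousLinearMap.smul_apply, ContinuousLinearMap.add_apply,
      ContinuousLinearMap.coe_smul', Pi.smul_apply, smul_eq_mul, hα₀]
    field_simp
    ring
  set L := ((U z)⁻¹ • (hP + α₀ • uP) : PhV n →L[ℝ] ℝ) with hL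
  -- derivative of K' = K(-H'(·), ·)
  have hKd : HasFDerivAt K (fderiv ℝ K (α₀, z)) (α₀, z) :=
    (hK.differentiable (by simp) _).hasFDerivAt
  set a := fderiv ℝ K (α₀, z) with ha
  have hφ : HasFDerivAt (fun w : PhV n => (-((H w - E) / U w), w))
      ((-L).prod (ContinuousLinearMap.id ℝ (PhV n))) z := HasFDerivAt.prodMk hH'd.neg (hasFDerivAt_id z)
  have hK' : HasFDerivAt (fun w : PhV n => K (-((H w - E) / U w), w))
      (a.comp ((-L).prod (ContinuousLinearMap.id ℝ (PhV n)))) z := by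
    have h0 : HasFDerivAt (K ∘ fun w : PhV n => (-((H w - E) / U w), w))
        (a.comp ((-L).prod (ContinuousLinearMap.id ℝ (PhV n)))) z :=
      HasFDerivAt.comp (g := K) (f := fun w : PhV n => (-((H w - E) / U w), w)) z hKd hφ
    exact h0
  -- derivative of K(α₀, ·)
  have hψ : HasFDerivAt (fun w : PhV n => (α₀, w))
      (((0 : PhV n →L[ℝ] ℝ)).prod (ContinuousLinearMap.id ℝ (PhV n))) z :=
    HasFDerivAt.prodMk (hasFDerivAt_const α₀ z) (hasFDerivAt_id z)
  have hKα : HasFDerivAt (fun w : PhV n => K (α₀, w))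
      (a.comp (((0 : PhV n →L[ℝ] ℝ)).prod (ContinuousLinearMap.id ℝ (PhV n)))) z :=
    hKd.comp z hψ
  -- derivative of H + α₀ U
  have hHαU : HasFDerivAt (fun w => H w + α₀ * U w) (hP + α₀ • uP) z :=
    hHd.add (hUd.const_mul α₀)
  have hsum := hsym α₀ z
  unfold pb at hsum ⊢
  rw [hK'.fderiv, hH'd.fderiv]
  rw [hKα.fderiv, hHαU.fderiv] at hsum
  set D := (hP + α₀ • uP : PhV n →L[ℝ] ℝ) with hD
  set B := (a.comp (((0 : PhV n →L[ℝ] ℝ)).prod (ContinuousLinearMap.id ℝ (PhV n)))) with hB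
  have key : ∀ j : Fin n,
      (a.comp ((-L).prod (ContinuousLinearMap.id ℝ (PhV n)))) ((Pi.single j 1 : Fin n → ℝ), 0) *
        ((U z)⁻¹ • D) (0, (Pi.single j 1 : Fin n → ℝ)) -
      (a.comp ((-L).prod (ContinuousLinearMap.id ℝ (PhV n)))) (0, (Pi.single j 1 : Fin n → ℝ)) *
        ((U z)⁻¹ • D) ((Pi.single j 1 : Fin n → ℝ), 0)
      = (U z)⁻¹ *
        (B ((Pi.single j 1 : Fin n → ℝ), 0) * D (0, (Pi.single j 1 : Fin n → ℝ)) -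
         B (0, (Pi.single j 1 : Fin n → ℝ)) * D ((Pi.single j 1 : Fin n → ℝ), 0)) := by
    intro j
    have hsplit : ∀ v : PhV n, a ((-L) v, v) = -(L v) * a (1, 0) + a (0, v) := by
      intro v
      have hv : (((-L) v : ℝ), v) = ((-(L v)) • ((1 : ℝ), (0 : PhV n))) + ((0 : ℝ), v) := by
        simp [Prod.smul_mk, Prod.mk_add_mk]
      rw [hv, map_add, map_smul]
      simp [smul_eq_mul]
    simp only [hB, ContinuousLinearMap.comp_apply, ContinuousLinearMap.prod_apply,
      ContinuousLinearMap.coe_id', id_eq, ContinuousLinearMap.zero_apply,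
      ContinuousLinearMap.smul_apply, smul_eq_mul]
    rw [hsplit ((Pi.single j 1 : Fin n → ℝ), 0), hsplit (0, (Pi.single j 1 : Fin n → ℝ))]
    have hLX : L ((Pi.single j 1 : Fin n → ℝ), 0) = (U z)⁻¹ * D ((Pi.single j 1 : Fin n → ℝ), 0) := by
      simp [hL, hD, smul_eq_mul]; ring
    have hLP : L (0, (Pi.single j 1 : Fin n → ℝ)) = (U z)⁻¹ * D (0, (Pi.single j 1 : Fin n → ℝ)) := by
      simp [hL, hD, smul_eq_mul]; ring
    rw [hLX, hLP]
    ring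
  rw [Finset.sum_congr rfl fun j _ => key j, ← Finset.mul_sum, hsum, mul_zero]
end

section
/- If K₁(α,·), K₂(α,·) are smooth families of constants of the motion for H + αU (i.e. {Kᵢ(α,·), H + αU} = 0 for all α ∈ ℝ), U nowhere vanishing, and H' = (H − E)/U, then {K₁(−H',·), K₂(−H',·)}(x,p) = ({K₁(α,·), K₂(α,·)})(x,p)|_{α = −H'(x,p)}, i.e. the CCM transform of the bracket equals the bracket of the transforms. -/
open Finset

private lemma pb_chain {n : ℕ} (K : ℝ × ((Fin n → ℝ) × (Fin n → ℝ)) → ℝ) (hK : ContDiff ℝ (⊤ : ℕ∞) K)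
    (A : ((Fin n → ℝ) × (Fin n → ℝ)) → ℝ) (z : (Fin n → ℝ) × (Fin n → ℝ))
    (D : ((Fin n → ℝ) × (Fin n → ℝ)) →L[ℝ] ℝ) (hA : HasFDerivAt A D z)
    (v : (Fin n → ℝ) × (Fin n → ℝ)) :
    fderiv ℝ (fun w => K (A w, w)) z v
      = D v * fderiv ℝ K (A z, z) (1, 0) + fderiv ℝ (fun w => K (A z, w)) z v := by
  have hKd : HasFDerivAt K (fderiv ℝ K (A z, z)) (A z, z) :=
    ((hK.differentiable (by simp)) (A z, z)).hasFDerivAt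
  have h1 : HasFDerivAt (fun w => ((A w, w) : ℝ × _))
      (D.prod (ContinuousLinearMap.id ℝ _)) z := hA.prodMk (hasFDerivAt_id z)
  have h3' := HasFDerivAt.comp (f := fun w => (A w, w)) z hKd h1
  have h3 : HasFDerivAt (fun w => K (A w, w))
      ((fderiv ℝ K (A z, z)).comp (D.prod (ContinuousLinearMap.id ℝ _))) z := h3'
  have h4' := hKd.comp z (hasFDerivAt_prodMk_right (A z) z)
  have h4 : HasFDerivAt (fun w => K (A z, w))
      ((fderiv ℝ K (A z, z)).comp (ContinuousLinearMap.inr ℝ ℝ _)) z := h4'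
  rw [h3.fderiv, h4.fderiv]
  have hv : ((D v, v) : ℝ × ((Fin n → ℝ) × (Fin n → ℝ)))
      = D v • ((1 : ℝ), (0 : (Fin n → ℝ) × (Fin n → ℝ))) + ((0 : ℝ), v) := by
    simp [Prod.ext_iff]
  simp only [ContinuousLinearMap.comp_apply, ContinuousLinearMap.prod_apply,
    ContinuousLinearMap.id_apply, ContinuousLinearMap.inr_apply]
  rw [hv, map_add, map_smul, smul_eq_mul]

private lemma pb_alg {n : ℕ} (a b c : ℝ) (fx fp gx gp P Q : Fin n → ℝ)
    (e1 : ∑ j : Fin n, (fx j * Q j - fp j * P j) = 0)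
    (e2 : ∑ j : Fin n, (gx j * Q j - gp j * P j) = 0) :
    ∑ j : Fin n, ((c * P j * a + fx j) * (c * Q j * b + gp j)
        - (c * Q j * a + fp j) * (c * P j * b + gx j))
      = ∑ j : Fin n, (fx j * gp j - fp j * gx j) := by
  have h : ∀ j ∈ Finset.univ, (c * P j * a + fx j) * (c * Q j * b + gp j)
        - (c * Q j * a + fp j) * (c * P j * b + gx j)
      = (fx j * gp j - fp j * gx j) + (-(a * c)) * (gx j * Q j - gp j * P j)
          + (b * c) * (fx j * Q j - fp j * P j) := fun j _ => by ring
  rw [Finset.sum_congr rfl h, Finset.sum_add_distrib, Finset.sum_add_distrib,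
    ← Finset.mul_sum, ← Finset.mul_sum, e1, e2]
  ring

/-- The CCM transform of the Poisson bracket of two symmetries equals the Poisson bracket
of the CCM transforms. -/
theorem stmt2 {n : ℕ}
    (H U : (Fin n → ℝ) × (Fin n → ℝ) → ℝ)
    (K₁ K₂ : ℝ × ((Fin n → ℝ) × (Fin n → ℝ)) → ℝ)
    (hH : ContDiff ℝ (⊤ : ℕ∞) H) (hU : ContDiff ℝ (⊤ : ℕ∞) U)
    (hK₁ : ContDiff ℝ (⊤ : ℕ∞) K₁) (hK₂ : ContDiff ℝ (⊤ : ℕ∞) K₂)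
    (hUne : ∀ z, U z ≠ 0)
    (hsym₁ : ∀ α : ℝ, ∀ z, pb (fun w => K₁ (α, w)) (fun w => H w + α * U w) z = 0)
    (hsym₂ : ∀ α : ℝ, ∀ z, pb (fun w => K₂ (α, w)) (fun w => H w + α * U w) z = 0)
    (E : ℝ) :
    ∀ z, pb (fun w => K₁ (-((H w - E) / U w), w)) (fun w => K₂ (-((H w - E) / U w), w)) z
      = pb (fun w => K₁ (-((H z - E) / U z), w)) (fun w => K₂ (-((H z - E) / U z), w)) z := by
  intro z
  set α₀ : ℝ := -((H z - E) / U z) with hα₀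
  have hHz : HasFDerivAt H (fderiv ℝ H z) z := ((hH.differentiable (by simp)) z).hasFDerivAt
  have hUz : HasFDerivAt U (fderiv ℝ U z) z := ((hU.differentiable (by simp)) z).hasFDerivAt
  -- derivative of A w = -((H w - E)/U w)
  have hinv : HasFDerivAt (fun w => (U w)⁻¹) ((-(U z ^ 2)⁻¹) • fderiv ℝ U z) z :=
    (hasDerivAt_inv (hUne z)).comp_hasFDerivAt z hUz
  have hA' := ((hHz.sub_const E).mul hinv).neg
  have hfun : (fun w => -((H w - E) / U w)) = (fun w => -((H w - E) * (U w)⁻¹)) := by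
    funext w; rw [div_eq_mul_inv]
  set D : ((Fin n → ℝ) × (Fin n → ℝ)) →L[ℝ] ℝ :=
    -((H z - E) • ((-(U z ^ 2)⁻¹) • fderiv ℝ U z) + (U z)⁻¹ • fderiv ℝ H z) with hD
  have hA : HasFDerivAt (fun w => -((H w - E) / U w)) D z := by
    rw [hfun, hD]; exact hA'
  have hDv : ∀ v, D v = -(U z)⁻¹ * (fderiv ℝ H z v + α₀ * fderiv ℝ U z v) := by
    intro v
    simp only [hD, ContinuousLinearMap.neg_apply, ContinuousLinearMap.add_apply,
      ContinuousLinearMap.smul_apply, smul_eq_mul, hα₀]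
    field_simp [hUne z]
    ring
  -- the derivative of H + α₀ U
  have hHU : HasFDerivAt (fun w => H w + α₀ * U w) (fderiv ℝ H z + α₀ • fderiv ℝ U z) z :=
    hHz.add (hUz.const_mul α₀)
  -- chain rules
  have hd1 : ∀ v, fderiv ℝ (fun w => K₁ (-((H w - E) / U w), w)) z v
      = D v * fderiv ℝ K₁ (α₀, z) (1, 0) + fderiv ℝ (fun w => K₁ (α₀, w)) z v :=
    fun v => pb_chain K₁ hK₁ (fun w => -((H w - E) / U w)) z D hA v
  have hd2 : ∀ v, fderiv ℝ (fun w => K₂ (-((H w - E) / U w), w)) z v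
      = D v * fderiv ℝ K₂ (α₀, z) (1, 0) + fderiv ℝ (fun w => K₂ (α₀, w)) z v :=
    fun v => pb_chain K₂ hK₂ (fun w => -((H w - E) / U w)) z D hA v
  -- the symmetry sums
  have e1 : ∑ j : Fin n,
      (fderiv ℝ (fun w => K₁ (α₀, w)) z ((Pi.single j 1 : Fin n → ℝ), 0)
          * (fderiv ℝ H z (0, (Pi.single j 1 : Fin n → ℝ))
            + α₀ * fderiv ℝ U z (0, (Pi.single j 1 : Fin n → ℝ)))
        - fderiv ℝ (fun w => K₁ (α₀, w)) z (0, (Pi.single j 1 : Fin n → ℝ))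
          * (fderiv ℝ H z ((Pi.single j 1 : Fin n → ℝ), 0)
            + α₀ * fderiv ℝ U z ((Pi.single j 1 : Fin n → ℝ), 0))) = 0 := by
    have h := hsym₁ α₀ z
    simp only [pb, hHU.fderiv, ContinuousLinearMap.add_apply,
      ContinuousLinearMap.smul_apply, smul_eq_mul] at h
    exact h
  have e2 : ∑ j : Fin n,
      (fderiv ℝ (fun w => K₂ (α₀, w)) z ((Pi.single j 1 : Fin n → ℝ), 0)
          * (fderiv ℝ H z (0, (Pi.single j 1 : Fin n → ℝ))
            + α₀ * fderiv ℝ U z (0, (Pi.single j 1 : Fin n → ℝ)))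
        - fderiv ℝ (fun w => K₂ (α₀, w)) z (0, (Pi.single j 1 : Fin n → ℝ))
          * (fderiv ℝ H z ((Pi.single j 1 : Fin n → ℝ), 0)
            + α₀ * fderiv ℝ U z ((Pi.single j 1 : Fin n → ℝ), 0))) = 0 := by
    have h := hsym₂ α₀ z
    simp only [pb, hHU.fderiv, ContinuousLinearMap.add_apply,
      ContinuousLinearMap.smul_apply, smul_eq_mul] at h
    exact h
  simp only [pb, hd1, hd2, hDv]
  exact pb_alg (fderiv ℝ K₁ (α₀, z) (1, 0)) (fderiv ℝ K₂ (α₀, z) (1, 0)) (-(U z)⁻¹)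
    (fun j => fderiv ℝ (fun w => K₁ (α₀, w)) z ((Pi.single j 1 : Fin n → ℝ), 0))
    (fun j => fderiv ℝ (fun w => K₁ (α₀, w)) z (0, (Pi.single j 1 : Fin n → ℝ)))
    (fun j => fderiv ℝ (fun w => K₂ (α₀, w)) z ((Pi.single j 1 : Fin n → ℝ), 0))
    (fun j => fderiv ℝ (fun w => K₂ (α₀, w)) z (0, (Pi.single j 1 : Fin n → ℝ)))
    (fun j => fderiv ℝ H z ((Pi.single j 1 : Fin n → ℝ), 0)
      + α₀ * fderiv ℝ U z ((Pi.single j 1 : Fin n → ℝ), 0))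
    (fun j => fderiv ℝ H z (0, (Pi.single j 1 : Fin n → ℝ))
      + α₀ * fderiv ℝ U z (0, (Pi.single j 1 : Fin n → ℝ)))
    e1 e2
end

section
/- (Jacobi transform preserves symmetries) With H₀ = Σᵢⱼ gⁱʲ(x)pᵢpⱼ, U nowhere vanishing, E ∈ ℝ, suppose K = Σ_{j=0}^{[N/2]} K_{N−2j} (K_{N−2j} homogeneous of degree N−2j in momenta) satisfies the graded conditions {K_N, H₀} = 0, {K_{N−2k}, U} + {K_{N−2k−2}, H₀} = 0 for 0 ≤ k ≤ [N/2]−1, and {K₁,U} = 0 when N is odd. Then K̂ = Σ_{j=0}^{[N/2]} (−(H₀−E)/U)ʲ K_{N−2j} Poisson-commutes with (H₀ − E)/U. -/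
open Finset

section Helpers

variable {n : ℕ} {f g h : (Fin n → ℝ) × (Fin n → ℝ) → ℝ} {z : (Fin n → ℝ) × (Fin n → ℝ)}

lemma pb_self (f : (Fin n → ℝ) × (Fin n → ℝ) → ℝ) (z) : pb f f z = 0 := by
  simp [pb, mul_comm]

lemma pb_const_left (c : ℝ) (g : (Fin n → ℝ) × (Fin n → ℝ) → ℝ) (z) :
    pb (fun _ => c) g z = 0 := by
  simp [pb, fderiv_const]

lemma pb_neg_left : pb (fun w => -f w) g z = -pb f g z := by
  simp only [pb, fderiv_fun_neg, ContinuousLinearMap.neg_apply, ← Finset.sum_neg_distrib]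
  exact Finset.sum_congr rfl fun j _ => by ring

lemma pb_mul_left (h : (Fin n → ℝ) × (Fin n → ℝ) → ℝ)
    (hf : DifferentiableAt ℝ f z) (hg : DifferentiableAt ℝ g z) :
    pb (fun w => f w * g w) h z = f z * pb g h z + g z * pb f h z := by
  simp only [pb, fderiv_fun_mul hf hg, ContinuousLinearMap.add_apply,
    ContinuousLinearMap.smul_apply, smul_eq_mul]
  rw [Finset.mul_sum, Finset.mul_sum, ← Finset.sum_add_distrib]
  exact Finset.sum_congr rfl fun j _ => by ring

lemma pb_sum_left {ι : Type*} (s : Finset ι) (F : ι → (Fin n → ℝ) × (Fin n → ℝ) → ℝ)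
    (hF : ∀ i ∈ s, DifferentiableAt ℝ (F i) z) :
    pb (fun w => ∑ i ∈ s, F i w) h z = ∑ i ∈ s, pb (F i) h z := by
  simp only [pb, fderiv_fun_sum hF, ContinuousLinearMap.sum_apply, Finset.sum_mul]
  rw [Finset.sum_comm]
  refine Finset.sum_congr rfl fun i _ => ?_
  rw [← Finset.sum_sub_distrib]

lemma pb_pow_self (hf : DifferentiableAt ℝ f z) (hfh : pb f h z = 0) (j : ℕ) :
    pb (fun w => f w ^ j) h z = 0 := by
  induction j with
  | zero => simpa using pb_const_left 1 h z
  | succ j ih =>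
      have : pb (fun w => f w ^ j * f w) h z = 0 := by
        rw [pb_mul_left (f := fun w => f w ^ j) h (hf.pow j) hf, ih, hfh]; ring
      simpa [pow_succ] using this

lemma pb_sub_const_right (E : ℝ) : pb f (fun w => g w - E) z = pb f g z := by
  simp [pb, fderiv_sub_const]

lemma pb_div_right (hf : DifferentiableAt ℝ f z) (hg : DifferentiableAt ℝ g z)
    (hh : DifferentiableAt ℝ h z) (h0 : h z ≠ 0) :
    pb f (fun w => g w / h w) z
      = (pb f g z * h z - g z * pb f h z) / h z ^ 2 := by
  have hinv : HasFDerivAt (fun w => (h w)⁻¹) ((-(h z ^ 2)⁻¹) • fderiv ℝ h z) z :=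
    (hasDerivAt_inv h0).comp_hasFDerivAt z hh.hasFDerivAt
  have hdiv : HasFDerivAt (fun w => g w / h w)
      (g z • ((-(h z ^ 2)⁻¹) • fderiv ℝ h z) + (h z)⁻¹ • fderiv ℝ g z) z := by
    simp only [div_eq_mul_inv]
    exact hg.hasFDerivAt.mul hinv
  simp only [pb, hdiv.fderiv, ContinuousLinearMap.add_apply, ContinuousLinearMap.smul_apply,
    smul_eq_mul]
  rw [eq_div_iff (pow_ne_zero 2 h0), Finset.sum_mul, Finset.sum_mul, Finset.mul_sum,
    ← Finset.sum_sub_distrib]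
  refine Finset.sum_congr rfl fun j _ => ?_
  field_simp
  ring

lemma fderiv_fst_comp_apply (φ : (Fin n → ℝ) → ℝ) (hφ : DifferentiableAt ℝ φ z.1)
    (v : Fin n → ℝ) :
    fderiv ℝ (fun w : (Fin n → ℝ) × (Fin n → ℝ) => φ w.1) z (0, v) = 0 := by
  have hcomp : fderiv ℝ (fun w : (Fin n → ℝ) × (Fin n → ℝ) => φ w.1) z
      = (fderiv ℝ φ z.1).comp (fderiv ℝ (Prod.fst) z) := fderiv_comp z hφ differentiableAt_fst
  rw [hcomp]
  simp [fderiv_fst]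

lemma pb_fst_fst (φ ψ : (Fin n → ℝ) → ℝ) (hφ : DifferentiableAt ℝ φ z.1)
    (hψ : DifferentiableAt ℝ ψ z.1) :
    pb (fun w => φ w.1) (fun w => ψ w.1) z = 0 := by
  simp [pb, fderiv_fst_comp_apply φ hφ, fderiv_fst_comp_apply ψ hψ]

end Helpers

/-- Jacobi transform: the transformed function K̂ = Σⱼ (−(H₀−E)/U)ʲ K_{N−2j} Poisson-commutes
with (H₀ − E)/U. -/
theorem stmt4 {n N : ℕ}
    (g : (Fin n → ℝ) → Fin n → Fin n → ℝ)
    (u : (Fin n → ℝ) → ℝ)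
    (Kc : ℕ → (Fin n → ℝ) × (Fin n → ℝ) → ℝ)
    (E : ℝ)
    (hg : ∀ i j, ContDiff ℝ (⊤ : ℕ∞) fun x => g x i j)
    (hu : ContDiff ℝ (⊤ : ℕ∞) u)
    (hune : ∀ x, u x ≠ 0)
    (hKc : ∀ j, ContDiff ℝ (⊤ : ℕ∞) (Kc j))
    (hhom : ∀ j ≤ N / 2, ∀ (x p : Fin n → ℝ) (a : ℝ),
      Kc j (x, a • p) = a ^ (N - 2 * j) * Kc j (x, p))
    (h0 : ∀ z, pb (Kc 0) (fun w => ∑ i : Fin n, ∑ j : Fin n, g w.1 i j * w.2 i * w.2 j) z = 0)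
    (h1 : ∀ k, k + 1 ≤ N / 2 → ∀ z,
      pb (Kc k) (fun w => u w.1) z
        + pb (Kc (k + 1)) (fun w => ∑ i : Fin n, ∑ j : Fin n, g w.1 i j * w.2 i * w.2 j) z = 0)
    (h2 : N % 2 = 1 → ∀ z, pb (Kc (N / 2)) (fun w => u w.1) z = 0) :
    ∀ z, pb
      (fun w => ∑ j ∈ range (N / 2 + 1),
        (-(((∑ i : Fin n, ∑ k : Fin n, g w.1 i k * w.2 i * w.2 k) - E) / u w.1)) ^ j * Kc j w)
      (fun w => ((∑ i : Fin n, ∑ k : Fin n, g w.1 i k * w.2 i * w.2 k) - E) / u w.1) z = 0 := by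
  intro z
  set M := N / 2 with hM
  set H0 : (Fin n → ℝ) × (Fin n → ℝ) → ℝ :=
    fun w => ∑ i : Fin n, ∑ k : Fin n, g w.1 i k * w.2 i * w.2 k with hH0def
  set U : (Fin n → ℝ) × (Fin n → ℝ) → ℝ := fun w => u w.1 with hUdef
  set F : (Fin n → ℝ) × (Fin n → ℝ) → ℝ := fun w => (H0 w - E) / U w with hFdef
  -- differentiability
  have hH0smooth : ContDiff ℝ (⊤ : ℕ∞) H0 := by
    refine ContDiff.sum fun i _ => ContDiff.sum fun k _ => ?_
    have h2i : ContDiff ℝ (⊤ : ℕ∞) (fun w : (Fin n → ℝ) × (Fin n → ℝ) => w.2 i) :=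
      ((ContinuousLinearMap.proj i).comp
        (ContinuousLinearMap.snd ℝ (Fin n → ℝ) (Fin n → ℝ))).contDiff
    have h2k : ContDiff ℝ (⊤ : ℕ∞) (fun w : (Fin n → ℝ) × (Fin n → ℝ) => w.2 k) :=
      ((ContinuousLinearMap.proj k).comp
        (ContinuousLinearMap.snd ℝ (Fin n → ℝ) (Fin n → ℝ))).contDiff
    exact (((hg i k).comp contDiff_fst).mul h2i).mul h2k
  have hH0d : DifferentiableAt ℝ H0 z := (hH0smooth.differentiable (by simp)) z
  have hUd : DifferentiableAt ℝ U z := ((hu.comp contDiff_fst).differentiable (by simp)) z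
  have hUne : U z ≠ 0 := hune z.1
  have hFd : DifferentiableAt ℝ F z := by
    simp only [hFdef, div_eq_mul_inv]
    exact (hH0d.sub_const E).mul (hUd.inv hUne)
  have hKd : ∀ j, DifferentiableAt ℝ (Kc j) z := fun j => ((hKc j).differentiable (by simp)) z
  -- abbreviations for bracket values
  set A : ℕ → ℝ := fun j => pb (Kc j) H0 z with hA
  set B : ℕ → ℝ := fun j => pb (Kc j) U z with hB
  have hA0 : A 0 = 0 := h0 z
  have hstep : ∀ j < M, A (j + 1) + B j = 0 := fun j hj => by
    show pb (Kc (j + 1)) H0 z + pb (Kc j) U z = 0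
    linarith [h1 j (by omega) z]
  have hBM : B M = 0 := by
    rcases Nat.even_or_odd N with hN | hN
    · -- even case: Kc M depends only on x
      have hdeg : N - 2 * M = 0 := by
        rcases hN with ⟨t, ht⟩
        omega
      have hKM : ∀ x p : Fin n → ℝ, Kc M (x, p) = Kc M (x, 0) := by
        intro x p
        have := hhom M le_rfl x p 0
        rw [hdeg] at this
        simpa using this.symm
      have hrw : Kc M = fun w => (fun x => Kc M (x, 0)) w.1 := by
        funext w
        calc Kc M w = Kc M (w.1, w.2) := rfl
        _ = Kc M (w.1, 0) := hKM w.1 w.2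
      have hφd : DifferentiableAt ℝ (fun x : Fin n → ℝ => Kc M (x, 0)) z.1 := by
        have : DifferentiableAt ℝ (fun x : Fin n → ℝ => (x, (0 : Fin n → ℝ))) z.1 :=
          differentiableAt_id.prodMk (differentiableAt_const 0)
        exact DifferentiableAt.comp z.1 (((hKc M).differentiable (by simp)) (z.1, 0)) this
      have hz : pb (fun w => (fun x => Kc M (x, 0)) w.1) (fun w => u w.1) z = 0 :=
        pb_fst_fst _ u hφd ((hu.differentiable (by simp)) z.1)
      show pb (Kc M) U z = 0
      rw [hrw]
      exact hz
    · have hmod : N % 2 = 1 := Nat.odd_iff.mp hN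
      exact h2 hmod z
  -- the transform
  have key : pb (fun w => ∑ j ∈ range (M + 1), (-F w) ^ j * Kc j w) F z
      = ∑ j ∈ range (M + 1), (-F z) ^ j * pb (Kc j) F z := by
    rw [pb_sum_left (range (M + 1)) (fun j w => (-F w) ^ j * Kc j w)
      (fun j _ => ((hFd.neg.pow j)).mul (hKd j))]
    refine Finset.sum_congr rfl fun j _ => ?_
    rw [pb_mul_left (f := fun w => (-F w) ^ j) F (hFd.neg.pow j) (hKd j)]
    have hpow : pb (fun w => (-F w) ^ j) F z = 0 := by
      refine pb_pow_self (f := fun w => -F w) hFd.neg ?_ j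
      rw [pb_neg_left, pb_self]; ring
    rw [hpow]; ring
  have hKcF : ∀ j, pb (Kc j) F z = (A j * U z - (H0 z - E) * B j) / U z ^ 2 := by
    intro j
    rw [hFdef]
    rw [pb_div_right (hKd j) (hH0d.sub_const E) hUd hUne]
    rw [pb_sub_const_right]
  -- final computation
  have hgoal : pb (fun w => ∑ j ∈ range (M + 1), (-F w) ^ j * Kc j w) F z = 0 := by
    rw [key]
    have hterm : ∀ j ∈ range (M + 1),
        (-F z) ^ j * pb (Kc j) F z
          = ((-F z) ^ j * A j + (-F z) ^ (j + 1) * B j) / U z := by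
      intro j _
      rw [hKcF j]
      have hFz : F z = (H0 z - E) / U z := rfl
      rw [hFz]
      field_simp
      linear_combination ((-((H0 z - E) / U z)) ^ j * B j * (H0 z - E)) * mul_inv_cancel₀ hUne
    rw [Finset.sum_congr rfl hterm, ← Finset.sum_div]
    have hsum : ∑ j ∈ range (M + 1), ((-F z) ^ j * A j + (-F z) ^ (j + 1) * B j) = 0 := by
      rw [Finset.sum_add_distrib,
        Finset.sum_range_succ' (fun j => (-F z) ^ j * A j) M,
        Finset.sum_range_succ (fun j => (-F z) ^ (j + 1) * B j) M, hA0, hBM]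
      simp only [pow_zero, one_mul, mul_zero, add_zero]
      rw [← Finset.sum_add_distrib]
      refine Finset.sum_eq_zero fun j hj => ?_
      rw [← mul_add, hstep j (Finset.mem_range.mp hj), mul_zero]
    rw [hsum, zero_div]
  exact hgoal
end

section
/- Under the hypotheses of the Jacobi transform (K, L polynomial-in-momenta constants of the motion for H₀ + U, with graded components and transform K̂ = Σⱼ (−(H₀−E)/U)ʲ K_{N−2j}), the Jacobi transform is multiplicative: the transform of the product KL equals K̂ L̂. -/
open Finset

set_option maxHeartbeats 1000000 in
/-- The Jacobi transform is multiplicative: the transform of the product KL (whose graded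
components are the convolutions of the graded components of K and L) equals K̂ · L̂. -/
theorem stmt5 {n N M : ℕ}
    (g : (Fin n → ℝ) → Fin n → Fin n → ℝ)
    (u : (Fin n → ℝ) → ℝ)
    (Kc Lc : ℕ → (Fin n → ℝ) × (Fin n → ℝ) → ℝ)
    (E : ℝ)
    (hg : ∀ i j, ContDiff ℝ (⊤ : ℕ∞) fun x => g x i j)
    (hu : ContDiff ℝ (⊤ : ℕ∞) u)
    (hune : ∀ x, u x ≠ 0)
    (hKc : ∀ j, ContDiff ℝ (⊤ : ℕ∞) (Kc j)) (hLc : ∀ j, ContDiff ℝ (⊤ : ℕ∞) (Lc j))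
    (hKzero : ∀ j, N / 2 < j → Kc j = 0)
    (hLzero : ∀ j, M / 2 < j → Lc j = 0)
    (hKhom : ∀ j ≤ N / 2, ∀ (x p : Fin n → ℝ) (a : ℝ),
      Kc j (x, a • p) = a ^ (N - 2 * j) * Kc j (x, p))
    (hLhom : ∀ j ≤ M / 2, ∀ (x p : Fin n → ℝ) (a : ℝ),
      Lc j (x, a • p) = a ^ (M - 2 * j) * Lc j (x, p))
    (hKsym : ∀ z, pb (fun w => ∑ j ∈ range (N / 2 + 1), Kc j w)
      (fun w => (∑ i : Fin n, ∑ j : Fin n, g w.1 i j * w.2 i * w.2 j) + u w.1) z = 0)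
    (hLsym : ∀ z, pb (fun w => ∑ j ∈ range (M / 2 + 1), Lc j w)
      (fun w => (∑ i : Fin n, ∑ j : Fin n, g w.1 i j * w.2 i * w.2 j) + u w.1) z = 0) :
    ∀ z : (Fin n → ℝ) × (Fin n → ℝ),
      (∑ m ∈ range (N / 2 + M / 2 + 1),
        (-(((∑ i : Fin n, ∑ k : Fin n, g z.1 i k * z.2 i * z.2 k) - E) / u z.1)) ^ m *
          (∑ j ∈ range (m + 1), Kc j z * Lc (m - j) z))
      = (∑ j ∈ range (N / 2 + 1),
          (-(((∑ i : Fin n, ∑ k : Fin n, g z.1 i k * z.2 i * z.2 k) - E) / u z.1)) ^ j * Kc j z)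
        * (∑ k ∈ range (M / 2 + 1),
          (-(((∑ i : Fin n, ∑ l : Fin n, g z.1 i l * z.2 i * z.2 l) - E) / u z.1)) ^ k * Lc k z) := by

  intro z
  set c : ℝ := -(((∑ i : Fin n, ∑ k : Fin n, g z.1 i k * z.2 i * z.2 k) - E) / u z.1) with hc
  have hK0 : ∀ j, N / 2 < j → Kc j z = 0 := fun j hj => by rw [hKzero j hj]; rfl
  have hL0 : ∀ j, M / 2 < j → Lc j z = 0 := fun j hj => by rw [hLzero j hj]; rfl
  calc
    (∑ m ∈ range (N / 2 + M / 2 + 1), c ^ m * ∑ j ∈ range (m + 1), Kc j z * Lc (m - j) z)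
        = ∑ m ∈ range (N / 2 + M / 2 + 1), ∑ j ∈ range (m + 1),
            (c ^ j * Kc j z) * (c ^ (m - j) * Lc (m - j) z) := by
          refine sum_congr rfl fun m _ => ?_
          rw [mul_sum]
          refine sum_congr rfl fun j hj => ?_
          have hjm : j + (m - j) = m :=
            Nat.add_sub_cancel' (Nat.lt_succ_iff.mp (mem_range.mp hj))
          have hpow : c ^ m = c ^ j * c ^ (m - j) := by rw [← pow_add, hjm]
          rw [hpow]; ring
    _ = ∑ j ∈ range (N / 2 + M / 2 + 1), ∑ k ∈ range (N / 2 + M / 2 + 1 - j),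
            (c ^ j * Kc j z) * (c ^ k * Lc k z) :=
          Finset.sum_range_diag_flip (N / 2 + M / 2 + 1) (fun a b => c ^ a * Kc a z * (c ^ b * Lc b z))
    _ = ∑ j ∈ range (N / 2 + 1), (c ^ j * Kc j z) * ∑ k ∈ range (M / 2 + 1), c ^ k * Lc k z := by
          rw [← sum_subset (range_subset_range.mpr (by omega) :
              range (N / 2 + 1) ⊆ range (N / 2 + M / 2 + 1))]
          · refine sum_congr rfl fun j hj => ?_
            have hjA : j ≤ N / 2 := Nat.lt_succ_iff.mp (mem_range.mp hj)
            rw [← mul_sum]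
            congr 1
            symm
            apply sum_subset
            · intro k hk
              rw [mem_range] at hk ⊢
              omega
            · intro k _ hk'
              rw [mem_range, not_lt] at hk'
              rw [hL0 k (by omega)]
              ring
          · intro j _ hj'
            rw [mem_range, not_lt] at hj'
            have : Kc j z = 0 := hK0 j (by omega)
            simp [this]
    _ = _ := by rw [sum_mul]
end

section
/- (3rd order operator CCM) Let H₀, U, K₃, K₁ be elements of an associative algebra with U invertible, satisfying [K₃, H₀] = 0, [K₃, U] + [K₁, H₀] = 0, and [K₁, U] = 0. Assume additionally U commutes with itself and let b be a central scalar. Then K̃ = K₃ − K₁ U⁻¹(H₀ + b) satisfies [K̃, U⁻¹(H₀ + b)] = 0. -/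
/-!
Put `A = U⁻¹ (H₀ + b)`. Since `b` is central and `K₁` commutes with `U⁻¹`, the Leibniz rule gives
`[K₁, A] = U⁻¹ [K₁, H₀]`, while `[K₃, H₀] = 0` and `[K₃, U⁻¹] = U⁻¹ [U, K₃] U⁻¹ = U⁻¹ [K₁, H₀] U⁻¹`
give `[K₃, A] = U⁻¹ [K₁, H₀] A`. As `[K₁ A, A] = [K₁, A] A`, the two terms of `[K₃ - K₁ A, A]`
cancel.
-/

namespace Ring

variable {R : Type*} [Ring R]

theorem lie_swap (x y : R) : ⁅x, y⁆ = -⁅y, x⁆ := by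
  simp only [lie_def, neg_sub]

theorem lie_add_right (x y z : R) : ⁅x, y + z⁆ = ⁅x, y⁆ + ⁅x, z⁆ := by
  simp only [lie_def]; noncomm_ring

theorem lie_mul_right (x y z : R) : ⁅x, y * z⁆ = ⁅x, y⁆ * z + y * ⁅x, z⁆ := by
  simp only [lie_def]; noncomm_ring

theorem sub_mul_self_lie (x y a : R) : ⁅x - y * a, a⁆ = ⁅x, a⁆ - ⁅y, a⁆ * a := by
  simp only [lie_def]; noncomm_ring

theorem lie_units_inv (x : R) (u : Rˣ) : ⁅x, (↑u⁻¹ : R)⁆ = ↑u⁻¹ * ⁅(u : R), x⁆ * ↑u⁻¹ := by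
  simp only [lie_def, mul_sub, sub_mul, mul_assoc, Units.mul_inv, mul_one]
  simp only [← mul_assoc, Units.inv_mul, one_mul]

end Ring

open Ring

theorem lie_sub_mul_units_inv_mul_eq_zero {R : Type*} [Ring R] (u : Rˣ) {K₃ K₁ H : R}
    (h₃ : ⁅K₃, H⁆ = 0) (h₂ : ⁅(u : R), K₃⁆ = ⁅K₁, H⁆) (h₁ : Commute K₁ u) :
    ⁅K₃ - K₁ * (↑u⁻¹ * H), ↑u⁻¹ * H⁆ = 0 := by
  have hK₁ : ⁅K₁, ↑u⁻¹ * H⁆ = ↑u⁻¹ * ⁅K₁, H⁆ := by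
    rw [lie_mul_right, h₁.units_inv_right.lie_eq, zero_mul, zero_add]
  have hK₃ : ⁅K₃, ↑u⁻¹ * H⁆ = ↑u⁻¹ * ⁅K₁, H⁆ * (↑u⁻¹ * H) := by
    rw [lie_mul_right, lie_units_inv, h₃, h₂, mul_zero, add_zero, mul_assoc]
  rw [sub_mul_self_lie, hK₁, hK₃, sub_self]

/-- 3rd order operator CCM: given [K₃,H₀] = 0, [K₃,U] + [K₁,H₀] = 0, [K₁,U] = 0 with U
invertible and b a central scalar, K̃ = K₃ − K₁ U⁻¹(H₀+b) commutes with U⁻¹(H₀+b). -/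
theorem stmt13 {R : Type*} [Ring R] [Algebra ℝ R] (H₀ U K₃ K₁ Uinv : R) (b : ℝ)
    (hU : U * Uinv = 1) (hU' : Uinv * U = 1)
    (h1 : K₃ * H₀ - H₀ * K₃ = 0)
    (h2 : (K₃ * U - U * K₃) + (K₁ * H₀ - H₀ * K₁) = 0)
    (h3 : K₁ * U - U * K₁ = 0) :
    (K₃ - K₁ * (Uinv * (H₀ + algebraMap ℝ R b))) * (Uinv * (H₀ + algebraMap ℝ R b))
      - (Uinv * (H₀ + algebraMap ℝ R b)) * (K₃ - K₁ * (Uinv * (H₀ + algebraMap ℝ R b))) = 0 := by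
  have lie_algebraMap : ∀ x : R, ⁅x, H₀ + algebraMap ℝ R b⁆ = ⁅x, H₀⁆ := fun x => by
    rw [lie_add_right, Commute.lie_eq (Algebra.commutes b x).symm, add_zero]
  have hUK₃ : ⁅U, K₃⁆ = ⁅K₁, H₀⁆ := by
    rw [lie_swap, neg_eq_iff_add_eq_zero]; exact h2
  exact lie_sub_mul_units_inv_mul_eq_zero ⟨U, Uinv, hU, hU'⟩
    (by rw [lie_algebraMap]; exact h1) (by rw [lie_algebraMap]; exact hUK₃) (sub_eq_zero.mp h3)
end

section
/- (Nth order operator CCM) Let H, U, and K₀', K₂', …, K_N' (indexed as K_{N−2j} for j = 0,…,[N/2]) be elements of an associative algebra with U invertible and b a central scalar. Suppose [K_{N−2j}, U] + [K_{N−2j−2}, H] = 0 for all j = 0, 1, …, [N/2], with the conventions K_{N+2} = 0 and K_{N−2j} = 0 for j > [N/2]. Then K̃ = Σ_{h=0}^{[N/2]} (−1)ʰ K_{N−2h} (U⁻¹(H+b))ʰ satisfies [K̃, U⁻¹(H+b)] = 0. -/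
/-!
Put `A = U⁻¹ H`. Multiplying the chain relation `[K_j, U] = -[K_{j+1}, H]` by `U⁻¹` gives
`[K_j, A] = U⁻¹ ([K_j, H] + [K_{j+1}, H] A)`. Hence the `h`-th term `(-1)ʰ [K_h, A] Aʰ` of
`[Σ (-1)ʰ K_h Aʰ, A]` equals `f h - f (h + 1)` with `f h = (-1)ʰ U⁻¹ [K_h, H] Aʰ`, and the sum
telescopes to `f 0 - f (n + 1) = 0`. A central shift `H ↦ H + b` changes no commutator with `H`.
-/

open Finset

section

attribute [local instance] LieRing.ofAssociativeRing

variable {R : Type*} [Ring R]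

theorem lie_units_inv_mul_of_lie_add_lie_eq_zero (u : Rˣ) {K K' H : R}
    (h : ⁅K, (u : R)⁆ + ⁅K', H⁆ = 0) :
    ⁅K, ↑u⁻¹ * H⁆ = ↑u⁻¹ * (⁅K, H⁆ + ⁅K', H⁆ * (↑u⁻¹ * H)) := by
  have hUK : (u : R) * K = K * u + ⁅K', H⁆ := by
    simp only [Ring.lie_def] at h ⊢
    linear_combination (norm := noncomm_ring) -h
  calc ⁅K, ↑u⁻¹ * H⁆ = ↑u⁻¹ * ((u * K) * ↑u⁻¹ * H - H * K) := by
        simp only [Ring.lie_def, mul_sub, ← mul_assoc, Units.inv_mul, one_mul]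
    _ = ↑u⁻¹ * (⁅K, H⁆ + ⁅K', H⁆ * (↑u⁻¹ * H)) := by
        simp only [hUK, Ring.lie_def, add_mul, mul_assoc, Units.mul_inv_cancel_left]
        noncomm_ring

theorem lie_add_algebraMap {S : Type*} [CommSemiring S] [Algebra S R] (x y : R) (c : S) :
    ⁅x, y + algebraMap S R c⁆ = ⁅x, y⁆ := by
  rw [lie_add, Ring.lie_def x (algebraMap S R c), Algebra.commutes, sub_self, add_zero]

theorem lie_mul_pow_self (x A : R) (k : ℕ) : ⁅x * A ^ k, A⁆ = ⁅x, A⁆ * A ^ k := by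
  simp only [Ring.lie_def, sub_mul, mul_assoc, pow_mul_comm']

theorem lie_neg_one_pow_mul (x A : R) (k : ℕ) : ⁅(-1) ^ k * x, A⁆ = (-1) ^ k * ⁅x, A⁆ := by
  simp only [Ring.lie_def, mul_sub, mul_assoc, ((Commute.neg_one_left A).pow_left k).left_comm]

theorem lie_alternating_sum_units_inv_mul_eq_zero (u : Rˣ) (H : R) (K : ℕ → R) (n : ℕ)
    (htop : ⁅K 0, H⁆ = 0) (hvanish : K (n + 1) = 0)
    (hchain : ∀ j ≤ n, ⁅K j, (u : R)⁆ + ⁅K (j + 1), H⁆ = 0) :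
    ⁅∑ h ∈ range (n + 1), (-1) ^ h * (K h * (↑u⁻¹ * H) ^ h), ↑u⁻¹ * H⁆ = 0 := by
  set A := ↑u⁻¹ * H
  set f : ℕ → R := fun h => (-1) ^ h * (↑u⁻¹ * (⁅K h, H⁆ * A ^ h))
  have hterm : ∀ h ∈ range (n + 1), ⁅(-1) ^ h * (K h * A ^ h), A⁆ = f h - f (h + 1) := by
    intro h hh
    rw [lie_neg_one_pow_mul, lie_mul_pow_self,
      lie_units_inv_mul_of_lie_add_lie_eq_zero u (hchain h (mem_range_succ_iff.mp hh))]
    simp only [f, A, pow_succ']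
    noncomm_ring
  rw [sum_lie, sum_congr rfl hterm, sum_range_sub']
  simp [f, htop, hvanish]

end

-- `K j` stands for the paper's `K_{N−2j}`.
/-- Nth order operator CCM: given the chain [K_{N−2j},U] + [K_{N−2j−2},H] = 0 (with the
conventions [K_N,H] = 0 at the top and K_{N−2j} = 0 for j > [N/2]), the operator
K̃ = Σ_h (−1)ʰ K_{N−2h} (U⁻¹(H+b))ʰ commutes with U⁻¹(H+b). Here K j denotes K_{N−2j}. -/
theorem stmt15 {R : Type*} [Ring R] [Algebra ℝ R] (N : ℕ) (H U Uinv : R) (K : ℕ → R) (b : ℝ)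
    (hU : U * Uinv = 1) (hU' : Uinv * U = 1)
    (hzero : ∀ j, N / 2 < j → K j = 0)
    (htop : K 0 * H - H * K 0 = 0)
    (hchain : ∀ j ≤ N / 2, (K j * U - U * K j) + (K (j + 1) * H - H * K (j + 1)) = 0) :
    (∑ h ∈ range (N / 2 + 1), (-1 : R) ^ h * (K h * (Uinv * (H + algebraMap ℝ R b)) ^ h))
        * (Uinv * (H + algebraMap ℝ R b))
      - (Uinv * (H + algebraMap ℝ R b))
        * (∑ h ∈ range (N / 2 + 1), (-1 : R) ^ h * (K h * (Uinv * (H + algebraMap ℝ R b)) ^ h))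
      = 0 := by
  let u : Rˣ := ⟨U, Uinv, hU, hU'⟩
  have hcomm := lie_alternating_sum_units_inv_mul_eq_zero u (H + algebraMap ℝ R b) K (N / 2)
    (by rw [lie_add_algebraMap, Ring.lie_def, htop]) (hzero _ (Nat.lt_succ_self _))
    (fun j hj => by rw [lie_add_algebraMap, Ring.lie_def, Ring.lie_def]; exact hchain j hj)
  rwa [Ring.lie_def] at hcomm
end

section
/- Let H = p₁² + p₂² + b₁√x₁ + b₂x₂ on the phase space with coordinates (x₁,x₂,p₁,p₂), x₁ > 0, b₂ ≠ 0. Then K⁽²⁾ = p₂² + b₂x₂ and K⁽³⁾ = p₁³ + (3/2)b₁√x₁ p₁ − (3b₁²/(4b₂)) p₂ both Poisson-commute with H. -/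
/-!
Everything follows from the coordinate form of the bracket,
`{f, g} = Σⱼ (∂_{xⱼ}f ∂_{pⱼ}g − ∂_{pⱼ}f ∂_{xⱼ}g)`, applied to the explicit gradients: with
`∇ₓH = (b₁/(2√x₁), b₂)` and `∇ₚH = (2p₁, 2p₂)`, the bracket `{K⁽²⁾, H}` is `2b₂p₂ − 2p₂b₂`, and in
`{K⁽³⁾, H}` the terms `± 3b₁p₁²/(2√x₁)` cancel, as do `−3b₁²/4` and `b₂ · 3b₁²/(4b₂)`.
-/

open Finset

open ContinuousLinearMap

section

variable {n : ℕ}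

noncomputable def phaseForm (a c : Fin n → ℝ) : ((Fin n → ℝ) × (Fin n → ℝ)) →L[ℝ] ℝ :=
  ∑ j, (a j • (proj j).comp (fst ℝ _ _) + c j • (proj j).comp (snd ℝ _ _))

@[simp]
theorem phaseForm_apply (a c : Fin n → ℝ) (v : (Fin n → ℝ) × (Fin n → ℝ)) :
    phaseForm a c v = ∑ j, (a j * v.1 j + c j * v.2 j) := by
  simp [phaseForm]

theorem pb_eq_of_hasFDerivAt {f g : (Fin n → ℝ) × (Fin n → ℝ) → ℝ} {a c a' c' : Fin n → ℝ}
    {z : (Fin n → ℝ) × (Fin n → ℝ)} (hf : HasFDerivAt f (phaseForm a c) z)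
    (hg : HasFDerivAt g (phaseForm a' c') z) :
    pb f g z = ∑ j, (a j * c' j - c j * a' j) := by
  simp [pb, hf.fderiv, hg.fderiv, Pi.single_apply]

theorem hasFDerivAt_position (j : Fin n) (z : (Fin n → ℝ) × (Fin n → ℝ)) :
    HasFDerivAt (fun z => z.1 j) (phaseForm (Pi.single j 1) 0) z := by
  refine ((hasFDerivAt_apply (𝕜 := ℝ) j z.1).comp z (hasFDerivAt_fst (p := z))).congr_fderiv ?_
  exact ContinuousLinearMap.ext fun v => by simp [Pi.single_apply]

theorem hasFDerivAt_momentum (j : Fin n) (z : (Fin n → ℝ) × (Fin n → ℝ)) :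
    HasFDerivAt (fun z => z.2 j) (phaseForm 0 (Pi.single j 1)) z := by
  refine ((hasFDerivAt_apply (𝕜 := ℝ) j z.2).comp z (hasFDerivAt_snd (p := z))).congr_fderiv ?_
  exact ContinuousLinearMap.ext fun v => by simp [Pi.single_apply]

theorem hasFDerivAt_sqrt_position {z : (Fin n → ℝ) × (Fin n → ℝ)} {j : Fin n} (hz : 0 < z.1 j) :
    HasFDerivAt (fun z => √(z.1 j)) (phaseForm (Pi.single j (1 / (2 * √(z.1 j)))) 0) z := by
  refine ((Real.hasDerivAt_sqrt hz.ne').comp_hasFDerivAt z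
    (hasFDerivAt_position j z)).congr_fderiv ?_
  exact ContinuousLinearMap.ext fun v => by simp [Pi.single_apply]

end

section

variable (b₁ b₂ : ℝ) {z : (Fin 2 → ℝ) × (Fin 2 → ℝ)}

theorem hasFDerivAt_hamiltonian (hz : 0 < z.1 0) :
    HasFDerivAt (fun z => (z.2 0) ^ 2 + (z.2 1) ^ 2 + b₁ * √(z.1 0) + b₂ * z.1 1)
      (phaseForm ![b₁ / (2 * √(z.1 0)), b₂] ![2 * z.2 0, 2 * z.2 1]) z := by
  refine ((((hasFDerivAt_momentum 0 z).pow 2).add ((hasFDerivAt_momentum 1 z).pow 2)).add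
    ((hasFDerivAt_sqrt_position hz).const_mul b₁) |>.add
    ((hasFDerivAt_position 1 z).const_mul b₂)).congr_fderiv ?_
  refine ContinuousLinearMap.ext fun v => ?_
  simp only [add_apply, smul_apply, smul_eq_mul, nsmul_eq_mul, phaseForm_apply, Fin.sum_univ_two,
    Pi.single_apply, Pi.zero_apply, Matrix.cons_val_zero, Matrix.cons_val_one,
    Matrix.cons_val_fin_one, Fin.isValue, Fin.reduceEq, ↓reduceIte]
  ring

theorem hasFDerivAt_quadraticIntegral :
    HasFDerivAt (fun z => (z.2 1) ^ 2 + b₂ * z.1 1) (phaseForm ![0, b₂] ![0, 2 * z.2 1]) z := by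
  refine (((hasFDerivAt_momentum 1 z).pow 2).add
    ((hasFDerivAt_position 1 z).const_mul b₂)).congr_fderiv ?_
  refine ContinuousLinearMap.ext fun v => ?_
  simp only [add_apply, smul_apply, smul_eq_mul, nsmul_eq_mul, phaseForm_apply, Fin.sum_univ_two,
    Pi.single_apply, Pi.zero_apply, Matrix.cons_val_zero, Matrix.cons_val_one,
    Matrix.cons_val_fin_one, Fin.isValue, Fin.reduceEq, ↓reduceIte]
  ring

theorem hasFDerivAt_cubicIntegral (hz : 0 < z.1 0) :
    HasFDerivAt (fun z => (z.2 0) ^ 3 + (3 / 2) * b₁ * √(z.1 0) * z.2 0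
        - (3 * b₁ ^ 2 / (4 * b₂)) * z.2 1)
      (phaseForm ![3 * b₁ * z.2 0 / (4 * √(z.1 0)), 0]
        ![3 * (z.2 0) ^ 2 + (3 / 2) * b₁ * √(z.1 0), -(3 * b₁ ^ 2 / (4 * b₂))]) z := by
  refine (((hasFDerivAt_momentum 0 z).pow 3).add
    (((hasFDerivAt_sqrt_position hz).const_mul ((3 / 2) * b₁)).mul (hasFDerivAt_momentum 0 z))
    |>.sub ((hasFDerivAt_momentum 1 z).const_mul (3 * b₁ ^ 2 / (4 * b₂)))).congr_fderiv ?_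
  refine ContinuousLinearMap.ext fun v => ?_
  simp only [add_apply, sub_apply, smul_apply, smul_eq_mul, nsmul_eq_mul, phaseForm_apply,
    Fin.sum_univ_two, Pi.single_apply, Pi.zero_apply, Matrix.cons_val_zero, Matrix.cons_val_one,
    Matrix.cons_val_fin_one, Fin.isValue, Fin.reduceEq, ↓reduceIte]
  ring

end

/-- For H = p₁² + p₂² + b₁√x₁ + b₂x₂ (x₁ > 0, b₂ ≠ 0), both K⁽²⁾ = p₂² + b₂x₂ and
K⁽³⁾ = p₁³ + (3/2)b₁√x₁ p₁ − (3b₁²/(4b₂)) p₂ Poisson-commute with H. -/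
theorem stmt17 (b₁ b₂ : ℝ) (hb₂ : b₂ ≠ 0) :
    ∀ z : (Fin 2 → ℝ) × (Fin 2 → ℝ), 0 < z.1 0 →
      pb (fun z => (z.2 1) ^ 2 + b₂ * z.1 1)
        (fun z => (z.2 0) ^ 2 + (z.2 1) ^ 2 + b₁ * Real.sqrt (z.1 0) + b₂ * z.1 1) z = 0 ∧
      pb (fun z => (z.2 0) ^ 3 + (3 / 2) * b₁ * Real.sqrt (z.1 0) * z.2 0
          - (3 * b₁ ^ 2 / (4 * b₂)) * z.2 1)
        (fun z => (z.2 0) ^ 2 + (z.2 1) ^ 2 + b₁ * Real.sqrt (z.1 0) + b₂ * z.1 1) z = 0 := by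
  intro z hz
  have hH := hasFDerivAt_hamiltonian b₁ b₂ hz
  constructor
  · rw [pb_eq_of_hasFDerivAt (hasFDerivAt_quadraticIntegral b₂) hH]
    simp only [Fin.sum_univ_two, Matrix.cons_val_zero, Matrix.cons_val_one, Matrix.cons_val_fin_one]
    ring
  · rw [pb_eq_of_hasFDerivAt (hasFDerivAt_cubicIntegral b₁ b₂ hz) hH]
    simp only [Fin.sum_univ_two, Matrix.cons_val_zero, Matrix.cons_val_one, Matrix.cons_val_fin_one]
    field_simp
    ring
end

section
/- Let H = ∂₁₁ + ∂₂₂ + α(9x₁² + x₂²) acting on smooth functions of (x₁,x₂) (here ∂ᵢᵢ denotes the second partial derivative and α(9x₁²+x₂²) acts by multiplication). Then the third-order operator K = {x₁∂₂ − x₂∂₁, ∂₂₂} + (α/3)({x₂³, ∂₁} − 9{x₁x₂², ∂₂}) commutes with H, where {A,B} = AB + BA denotes the anticommutator. -/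
/-- Partial derivative operators on functions of (x₁, x₂) ∈ ℝ × ℝ. -/
noncomputable def d1 (f : ℝ × ℝ → ℝ) : ℝ × ℝ → ℝ := fun z => fderiv ℝ f z (1, 0)
noncomputable def d2 (f : ℝ × ℝ → ℝ) : ℝ × ℝ → ℝ := fun z => fderiv ℝ f z (0, 1)

section Aux
variable {f g : ℝ × ℝ → ℝ} {c : ℝ}

@[fun_prop] lemma contDiff_d1 (hf : ContDiff ℝ (⊤ : ℕ∞) f) : ContDiff ℝ (⊤ : ℕ∞) (d1 f) :=
  (hf.fderiv_right (by simp)).clm_apply contDiff_const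

@[fun_prop] lemma contDiff_d2 (hf : ContDiff ℝ (⊤ : ℕ∞) f) : ContDiff ℝ (⊤ : ℕ∞) (d2 f) :=
  (hf.fderiv_right (by simp)).clm_apply contDiff_const

@[simp] lemma d1_add (hf : ContDiff ℝ (⊤ : ℕ∞) f) (hg : ContDiff ℝ (⊤ : ℕ∞) g) :
    d1 (fun z => f z + g z) = fun z => d1 f z + d1 g z := by
  funext z
  simp [d1, fderiv_fun_add ((hf.differentiable (by simp)) z) ((hg.differentiable (by simp)) z)]

@[simp] lemma d2_add (hf : ContDiff ℝ (⊤ : ℕ∞) f) (hg : ContDiff ℝ (⊤ : ℕ∞) g) :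
    d2 (fun z => f z + g z) = fun z => d2 f z + d2 g z := by
  funext z
  simp [d2, fderiv_fun_add ((hf.differentiable (by simp)) z) ((hg.differentiable (by simp)) z)]

@[simp] lemma d1_sub (hf : ContDiff ℝ (⊤ : ℕ∞) f) (hg : ContDiff ℝ (⊤ : ℕ∞) g) :
    d1 (fun z => f z - g z) = fun z => d1 f z - d1 g z := by
  funext z
  simp [d1, fderiv_fun_sub ((hf.differentiable (by simp)) z) ((hg.differentiable (by simp)) z)]

@[simp] lemma d2_sub (hf : ContDiff ℝ (⊤ : ℕ∞) f) (hg : ContDiff ℝ (⊤ : ℕ∞) g) :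
    d2 (fun z => f z - g z) = fun z => d2 f z - d2 g z := by
  funext z
  simp [d2, fderiv_fun_sub ((hf.differentiable (by simp)) z) ((hg.differentiable (by simp)) z)]

@[simp] lemma d1_mul (hf : ContDiff ℝ (⊤ : ℕ∞) f) (hg : ContDiff ℝ (⊤ : ℕ∞) g) :
    d1 (fun z => f z * g z) = fun z => d1 f z * g z + f z * d1 g z := by
  funext z
  simp [d1, fderiv_fun_mul ((hf.differentiable (by simp)) z) ((hg.differentiable (by simp)) z)]
  ring

@[simp] lemma d2_mul (hf : ContDiff ℝ (⊤ : ℕ∞) f) (hg : ContDiff ℝ (⊤ : ℕ∞) g) :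
    d2 (fun z => f z * g z) = fun z => d2 f z * g z + f z * d2 g z := by
  funext z
  simp [d2, fderiv_fun_mul ((hf.differentiable (by simp)) z) ((hg.differentiable (by simp)) z)]
  ring

@[simp] lemma d1_const : d1 (fun _ : ℝ × ℝ => c) = fun _ => 0 := by
  funext z; simp [d1]

@[simp] lemma d2_const : d2 (fun _ : ℝ × ℝ => c) = fun _ => 0 := by
  funext z; simp [d2]

@[simp] lemma d1_fst : d1 (fun z : ℝ × ℝ => z.1) = fun _ => 1 := by
  funext z; simp [d1, fderiv_fst]

@[simp] lemma d2_fst : d2 (fun z : ℝ × ℝ => z.1) = fun _ => 0 := by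
  funext z; simp [d2, fderiv_fst]

@[simp] lemma d1_snd : d1 (fun z : ℝ × ℝ => z.2) = fun _ => 0 := by
  funext z; simp [d1, fderiv_snd]

@[simp] lemma d2_snd : d2 (fun z : ℝ × ℝ => z.2) = fun _ => 1 := by
  funext z; simp [d2, fderiv_snd]

lemma sq_eq (h : ℝ × ℝ → ℝ) : (fun z => h z ^ 2) = fun z => h z * h z := by
  funext z; ring

lemma cube_eq (h : ℝ × ℝ → ℝ) : (fun z => h z ^ 3) = fun z => h z * (h z * h z) := by
  funext z; ring

@[simp] lemma d1_fst_sq : d1 (fun z : ℝ × ℝ => z.1 ^ 2) = fun z => 2 * z.1 := by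
  rw [sq_eq (fun z => z.1), d1_mul (by fun_prop) (by fun_prop)]
  funext z; simp; ring

@[simp] lemma d2_fst_sq : d2 (fun z : ℝ × ℝ => z.1 ^ 2) = fun _ => 0 := by
  rw [sq_eq (fun z => z.1), d2_mul (by fun_prop) (by fun_prop)]
  funext z; simp

@[simp] lemma d1_snd_sq : d1 (fun z : ℝ × ℝ => z.2 ^ 2) = fun _ => 0 := by
  rw [sq_eq (fun z => z.2), d1_mul (by fun_prop) (by fun_prop)]
  funext z; simp

@[simp] lemma d2_snd_sq : d2 (fun z : ℝ × ℝ => z.2 ^ 2) = fun z => 2 * z.2 := by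
  rw [sq_eq (fun z => z.2), d2_mul (by fun_prop) (by fun_prop)]
  funext z; simp; ring

@[simp] lemma d1_snd_cube : d1 (fun z : ℝ × ℝ => z.2 ^ 3) = fun _ => 0 := by
  rw [cube_eq (fun z => z.2), d1_mul (by fun_prop) (by fun_prop),
    d1_mul (by fun_prop) (by fun_prop)]
  funext z; simp

@[simp] lemma d2_snd_cube : d2 (fun z : ℝ × ℝ => z.2 ^ 3) = fun z => 3 * z.2 ^ 2 := by
  rw [cube_eq (fun z => z.2), d2_mul (by fun_prop) (by fun_prop),
    d2_mul (by fun_prop) (by fun_prop)]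
  funext z; simp; ring

@[simp] lemma d2_d1 (hf : ContDiff ℝ (⊤ : ℕ∞) f) : d2 (d1 f) = d1 (d2 f) := by
  funext z
  show fderiv ℝ (fun y => fderiv ℝ f y (1,0)) z (0,1)
      = fderiv ℝ (fun y => fderiv ℝ f y (0,1)) z (1,0)
  rw [fderiv_clm_apply ((hf.fderiv_right (m := (⊤ : ℕ∞)) (by simp)).differentiable (by simp) z)
        (differentiableAt_const _),
      fderiv_clm_apply ((hf.fderiv_right (m := (⊤ : ℕ∞)) (by simp)).differentiable (by simp) z)
        (differentiableAt_const _)]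
  simp
  exact (hf.contDiffAt.isSymmSndFDerivAt (by rw [minSmoothness_of_isRCLikeNormedField]; exact WithTop.coe_le_coe.mpr le_top)) _ _

end Aux

/-- Multiplication operator by a function m. -/
def mulOp (m : ℝ × ℝ → ℝ) (f : ℝ × ℝ → ℝ) : ℝ × ℝ → ℝ := fun z => m z * f z

/-- Anticommutator of two operators: {A,B} = AB + BA. -/
def acomm (A B : (ℝ × ℝ → ℝ) → ℝ × ℝ → ℝ) (f : ℝ × ℝ → ℝ) : ℝ × ℝ → ℝ :=
  fun z => A (B f) z + B (A f) z

/-- The quantum 9-1 anisotropic oscillator H = ∂₁₁ + ∂₂₂ + α(9x₁²+x₂²). -/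
noncomputable def osc91H (α : ℝ) (f : ℝ × ℝ → ℝ) : ℝ × ℝ → ℝ :=
  fun z => d1 (d1 f) z + d2 (d2 f) z + α * (9 * z.1 ^ 2 + z.2 ^ 2) * f z

/-- The 3rd order symmetry K = {x₁∂₂ − x₂∂₁, ∂₂₂} + (α/3)({x₂³,∂₁} − 9{x₁x₂²,∂₂}). -/
noncomputable def osc91K (α : ℝ) (f : ℝ × ℝ → ℝ) : ℝ × ℝ → ℝ :=
  fun z =>
    acomm (fun h w => w.1 * d2 h w - w.2 * d1 h w) (fun h => d2 (d2 h)) f z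
    + (α / 3) * (acomm (mulOp fun w => w.2 ^ 3) d1 f z
        - 9 * acomm (mulOp fun w => w.1 * w.2 ^ 2) d2 f z)

lemma mulOp_def (m f : ℝ × ℝ → ℝ) : mulOp m f = fun z => m z * f z := rfl

lemma acomm_def (A B : (ℝ × ℝ → ℝ) → ℝ × ℝ → ℝ) (f : ℝ × ℝ → ℝ) :
    acomm A B f = fun z => A (B f) z + B (A f) z := rfl

lemma osc91H_def (α : ℝ) (f : ℝ × ℝ → ℝ) :
    osc91H α f = fun z => d1 (d1 f) z + d2 (d2 f) z + α * (9 * z.1 ^ 2 + z.2 ^ 2) * f z := rfl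

lemma osc91K_def (α : ℝ) (f : ℝ × ℝ → ℝ) :
    osc91K α f = fun z =>
      acomm (fun h w => w.1 * d2 h w - w.2 * d1 h w) (fun h => d2 (d2 h)) f z
      + (α / 3) * (acomm (mulOp fun w => w.2 ^ 3) d1 f z
          - 9 * acomm (mulOp fun w => w.1 * w.2 ^ 2) d2 f z) := rfl

@[fun_prop] lemma contDiff_osc91H (α : ℝ) (f : ℝ × ℝ → ℝ) (hf : ContDiff ℝ (⊤ : ℕ∞) f) :
    ContDiff ℝ (⊤ : ℕ∞) (osc91H α f) := by
  rw [osc91H_def]; fun_prop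


set_option maxHeartbeats 4000000 in
/-- The 3rd order operator K commutes with the 9-1 anisotropic oscillator Hamiltonian H. -/
theorem stmt19 (α : ℝ) :
    ∀ f : ℝ × ℝ → ℝ, ContDiff ℝ (⊤ : ℕ∞) f →
      osc91K α (osc91H α f) = osc91H α (osc91K α f) := by
  intro f hf
  funext z
  simp (disch := fun_prop) only [osc91K_def, osc91H_def, acomm_def, mulOp_def,
    d1_add, d2_add, d1_sub, d2_sub, d1_mul, d2_mul, d1_const, d2_const,
    d1_fst, d2_fst, d1_snd, d2_snd, d1_fst_sq, d2_fst_sq, d1_snd_sq, d2_snd_sq,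
    d1_snd_cube, d2_snd_cube, d2_d1]
  ring
end
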